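/- arXiv:1301.4082 — 2 statements merged into one kernel-verified Lean document; each statement's English description precedes it below -/
import Mathlib

section
/- (Proposition 1.) Consider a closed path on K subsystems (K ≥ 2) with local dimensions d : ZMod K → ℕ and matrices ρ_i on ℂ^{d(i+1)} ⊗ ℂ^{d(i)} for each i ∈ ZMod K, with link matrices M_i = R(ρ_i^T₁) and path operator P = M_{K-1} ⋯ M_1 · M_0. Let V_i be a unitary d(i) × d(i) complex matrix for each i ∈ ZMod K, set ρ̃_i = (V_{i+1} ⊗ V_i) · ρ_i · (V_{i+1} ⊗ V_i)†, and let P̃ = M̃_{K-1} ⋯ M̃_1 · M̃_0 with M̃_i = R(ρ̃_i^T₁). Then P = (V₀ ⊗ V₀*)† · P̃ · (V₀ ⊗ V₀*), where V* denotes the entrywise complex conjugate. -/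
/-!
Under the partial transpose followed by realignment, the local unitary `V (i+1) ⊗ V i` acting on
`ρ i` by conjugation becomes left multiplication by `V (i+1) ⊗ (V (i+1))*` and right
multiplication by `(V i ⊗ (V i)*)ᴴ`. These gauge factors are unitary, so in the path product the
inner ones cancel telescopically and only conjugation by `V 0 ⊗ (V 0)*` survives.
-/

open Matrix Kronecker

noncomputable section

/-- Partial transpose on the second tensor factor. -/
def PT1 {d₂ d₁ : ℕ} (M : Matrix (Fin d₂ × Fin d₁) (Fin d₂ × Fin d₁) ℂ) :
    Matrix (Fin d₂ × Fin d₁) (Fin d₂ × Fin d₁) ℂ :=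
  fun p q => M (p.1, q.2) (q.1, p.2)

/-- Realignment. -/
def realign {d₂ d₁ : ℕ} (M : Matrix (Fin d₂ × Fin d₁) (Fin d₂ × Fin d₁) ℂ) :
    Matrix (Fin d₂ × Fin d₂) (Fin d₁ × Fin d₁) ℂ :=
  fun p q => M (p.1, q.1) (p.2, q.2)

/-- Swap reindexing. -/
def swapRe {d₂ d₁ : ℕ} (ρ : Matrix (Fin d₂ × Fin d₁) (Fin d₂ × Fin d₁) ℂ) :
    Matrix (Fin d₁ × Fin d₂) (Fin d₁ × Fin d₂) ℂ :=
  fun p q => ρ (p.2, p.1) (q.2, q.1)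

/-- SWAP operator. -/
def swapOp (d : ℕ) : Matrix (Fin d × Fin d) (Fin d × Fin d) ℂ :=
  fun p q => if p.1 = q.2 ∧ p.2 = q.1 then 1 else 0

/-- Transport a square-block matrix along equalities of dimensions. -/
def mcast {m n m' n' : ℕ} (hm : m = m') (hn : n = n')
    (A : Matrix (Fin m × Fin m) (Fin n × Fin n) ℂ) :
    Matrix (Fin m' × Fin m') (Fin n' × Fin n') ℂ := hm ▸ hn ▸ A

/-- Partial products M_{n-1} ⋯ M₁ · M₀ of the link matrices along a closed path. -/
def pathProd {K : ℕ} (d : ZMod K → ℕ)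
    (M : ∀ i : ZMod K,
      Matrix (Fin (d (i + 1)) × Fin (d (i + 1))) (Fin (d i) × Fin (d i)) ℂ) :
    (n : ℕ) → Matrix (Fin (d (n : ZMod K)) × Fin (d (n : ZMod K)))
      (Fin (d (0 : ZMod K)) × Fin (d (0 : ZMod K))) ℂ
  | 0 => mcast (congrArg d (Nat.cast_zero (R := ZMod K)).symm) rfl 1
  | n + 1 => mcast (congrArg d (Nat.cast_add_one (R := ZMod K) n).symm) rfl
      (M (n : ZMod K) * pathProd d M n)

/-- The path operator P = M_{K-1} ⋯ M₁ · M₀, a square matrix of size d(0)². -/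
def pathOp {K : ℕ} (d : ZMod K → ℕ)
    (M : ∀ i : ZMod K,
      Matrix (Fin (d (i + 1)) × Fin (d (i + 1))) (Fin (d i) × Fin (d i)) ℂ) :
    Matrix (Fin (d (0 : ZMod K)) × Fin (d (0 : ZMod K)))
      (Fin (d (0 : ZMod K)) × Fin (d (0 : ZMod K))) ℂ :=
  mcast (congrArg d (ZMod.natCast_self K)) rfl (pathProd d M K)


lemma mcast_mul_right {m m' n k : ℕ} (hm : m = m')
    (X : Matrix (Fin m × Fin m) (Fin n × Fin n) ℂ)
    (Y : Matrix (Fin n × Fin n) (Fin k × Fin k) ℂ) :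
    mcast hm rfl (X * Y) = mcast hm rfl X * Y := by
  subst hm; rfl

lemma mcast_mul_left {K : ℕ} (d : ZMod K → ℕ)
    (G : ∀ i : ZMod K, Matrix (Fin (d i) × Fin (d i)) (Fin (d i) × Fin (d i)) ℂ)
    {i j : ZMod K} (h : i = j) {n : ℕ} (X : Matrix (Fin (d i) × Fin (d i)) (Fin n × Fin n) ℂ) :
    mcast (congrArg d h) rfl (G i * X) = G j * mcast (congrArg d h) rfl X := by
  subst h; rfl

section GaugeCovariance

variable {K : ℕ} (d : ZMod K → ℕ)
  {G : ∀ i : ZMod K, Matrix (Fin (d i) × Fin (d i)) (Fin (d i) × Fin (d i)) ℂ}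
  (M : ∀ i : ZMod K, Matrix (Fin (d (i + 1)) × Fin (d (i + 1))) (Fin (d i) × Fin (d i)) ℂ)

lemma pathProd_gauge (hG : ∀ i, G i ∈ unitaryGroup _ ℂ) (n : ℕ) :
    pathProd d (fun i => G (i + 1) * M i * (G i)ᴴ) n =
      G n * pathProd d M n * (G 0)ᴴ := by
  induction n with
  | zero =>
    have hG₀ : G 0 * (G 0)ᴴ = 1 := mem_unitaryGroup_iff.mp (hG 0)
    simp only [pathProd]
    rw [← mcast_mul_left d G Nat.cast_zero.symm, Matrix.mul_one, ← mcast_mul_right, hG₀]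
  | succ n ih =>
    have hGn : (G n)ᴴ * G n = 1 := mem_unitaryGroup_iff'.mp (hG n)
    simp only [pathProd]
    rw [ih]
    have hcancel : G (n + 1) * M n * (G n)ᴴ * (G n * pathProd d M n * (G 0)ᴴ) =
        G ((n : ZMod K) + 1) * (M n * pathProd d M n) * (G 0)ᴴ := by
      simp only [Matrix.mul_assoc]
      rw [← Matrix.mul_assoc (G n)ᴴ, hGn, Matrix.one_mul]
    rw [hcancel, mcast_mul_right, mcast_mul_left d G (Nat.cast_add_one n).symm]

lemma pathOp_gauge (hG : ∀ i, G i ∈ unitaryGroup _ ℂ) :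
    pathOp d (fun i => G (i + 1) * M i * (G i)ᴴ) = G 0 * pathOp d M * (G 0)ᴴ := by
  unfold pathOp
  rw [pathProd_gauge d M hG, mcast_mul_right, mcast_mul_left d G (ZMod.natCast_self K)]

end GaugeCovariance

lemma realign_PT1_kronecker_conj {a a' b b' : ℕ} (A : Matrix (Fin a') (Fin a) ℂ)
    (B : Matrix (Fin b') (Fin b) ℂ) (ρ : Matrix (Fin a × Fin b) (Fin a × Fin b) ℂ) :
    realign (PT1 ((A ⊗ₖ B) * ρ * (A ⊗ₖ B)ᴴ)) =
      (A ⊗ₖ A.map star) * realign (PT1 ρ) * (B ⊗ₖ B.map star)ᴴ := by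
  ext ⟨i, j⟩ ⟨α, β⟩
  simp only [realign, PT1, mul_apply, kroneckerMap_apply, conjTranspose_apply,
    Fintype.sum_prod_type, Finset.sum_mul, map_apply, star_mul', star_star]
  rw [Finset.sum_comm]
  conv_lhs => enter [2, δ]; rw [Finset.sum_comm]
  conv_lhs => enter [2, δ, 2, k]; rw [Finset.sum_comm]
  conv_lhs => enter [2, δ]; rw [Finset.sum_comm]
  refine Finset.sum_congr rfl fun δ _ => Finset.sum_congr rfl fun γ _ =>
    Finset.sum_congr rfl fun k _ => Finset.sum_congr rfl fun l _ => ?_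
  ring

lemma kronecker_map_star_mem_unitaryGroup {n : Type*} [Fintype n] [DecidableEq n]
    {U : Matrix n n ℂ} (hU : U ∈ unitaryGroup n ℂ) :
    U ⊗ₖ U.map star ∈ unitaryGroup (n × n) ℂ :=
  kronecker_mem_unitary hU (map_star_mem_unitaryGroup_iff.mpr hU)

theorem stmt5_general {K : ℕ} (d : ZMod K → ℕ)
    (ρ : ∀ i : ZMod K,
      Matrix (Fin (d (i + 1)) × Fin (d i)) (Fin (d (i + 1)) × Fin (d i)) ℂ)
    (V : ∀ i : ZMod K, Matrix (Fin (d i)) (Fin (d i)) ℂ)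
    (hV : ∀ i, V i ∈ Matrix.unitaryGroup (Fin (d i)) ℂ) :
    pathOp d (fun i => realign (PT1 (ρ i))) =
      (V 0 ⊗ₖ (V 0).map star)ᴴ *
        pathOp d (fun i => realign (PT1
          ((V (i + 1) ⊗ₖ V i) * ρ i * (V (i + 1) ⊗ₖ V i)ᴴ))) *
        (V 0 ⊗ₖ (V 0).map star) := by
  have hW := fun i => kronecker_map_star_mem_unitaryGroup (hV i)
  have hW₀ : (V 0 ⊗ₖ (V 0).map star)ᴴ * (V 0 ⊗ₖ (V 0).map star) = 1 :=
    mem_unitaryGroup_iff'.mp (hW 0)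
  simp only [realign_PT1_kronecker_conj]
  rw [pathOp_gauge d _ hW]
  simp only [← Matrix.mul_assoc, hW₀, Matrix.one_mul]
  rw [Matrix.mul_assoc, hW₀, Matrix.mul_one]

/-- Proposition 1: local unitary covariance of the path operator:
P = (V₀ ⊗ V₀*)† · P̃ · (V₀ ⊗ V₀*). -/
theorem stmt5 {K : ℕ} (hK : 2 ≤ K) (d : ZMod K → ℕ)
    (ρ : ∀ i : ZMod K,
      Matrix (Fin (d (i + 1)) × Fin (d i)) (Fin (d (i + 1)) × Fin (d i)) ℂ)
    (V : ∀ i : ZMod K, Matrix (Fin (d i)) (Fin (d i)) ℂ)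
    (hV : ∀ i, V i ∈ Matrix.unitaryGroup (Fin (d i)) ℂ) :
    pathOp d (fun i => realign (PT1 (ρ i))) =
      (V 0 ⊗ₖ (V 0).map star)ᴴ *
        pathOp d (fun i => realign (PT1
          ((V (i + 1) ⊗ₖ V i) * ρ i * (V (i + 1) ⊗ₖ V i)ᴴ))) *
        (V 0 ⊗ₖ (V 0).map star) :=
  stmt5_general d ρ V hV
end
end

section
/- Let d₁, d₂, d₃ be natural numbers and let a : Fin d₁ → ℂ, b : Fin d₂ → ℂ, c : Fin d₃ → ℂ be unit vectors, and let ψ be the fully separable tripartite pure state ψ_{(i,j,k)} = a_i · b_j · c_k, with global density matrix ρ the rank-one projection onto ψ. Let ρ₁₂, ρ₂₃, ρ₁₃ be the two-party reduced density matrices of ρ, and ρ₂₁, ρ₃₂ the swap reindexings of ρ₁₂, ρ₂₃. Then the path operator P = R(ρ₁₃^T₁) · R(ρ₃₂^T₁) · R(ρ₂₁^T₁) satisfies tr(Pⁿ) = 1 for every natural number n ≥ 1, and likewise the path operator P' = (R(ρ₁₂^T₁) · R(ρ₂₁^T₁))² satisfies tr(P'ⁿ) = 1 for every n ≥ 1;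 in particular all eigenvalues of P and of P' are zero except a single eigenvalue equal to 1. -/
/-!
Every two-party marginal of `ψ = a ⊗ b ⊗ c` is a Kronecker product of the pure states
`A = a a*`, `B = b b*`, `C = c c*`, and the realigned partial transpose of `X ⊗ₖ Y` is the
rank-one matrix `vec Xᵀ (vec Y)ᵀ`. In a product of two such matrices the inner factors contract
to `tr (Y' Y)`, which is `1` for pure states, so both path operators collapse to
`Q = R((A ⊗ₖ A)^T₁)`: an idempotent of trace `tr (A²) = 1`.
-/

open Matrix Kronecker

noncomputable section

theorem IsIdempotentElem.one_mem_spectrum {𝕜 A : Type*} [Field 𝕜] [Ring A] [Algebra 𝕜 A]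
    {p : A} (hp : IsIdempotentElem p) (hp0 : p ≠ 0) : (1 : 𝕜) ∈ spectrum 𝕜 p := by
  rw [spectrum.mem_iff, map_one]
  intro hu
  exact hp0 <| hu.mul_left_eq_zero.mp (by rw [mul_sub, mul_one, hp.eq, sub_self])

theorem IsIdempotentElem.trace_pow_eq_one_and_spectrum {𝕜 n : Type*} [Field 𝕜] [Fintype n]
    [DecidableEq n] {Q : Matrix n n 𝕜} (hQ : IsIdempotentElem Q) (hQ_trace : Q.trace = 1) :
    (∀ k : ℕ, 1 ≤ k → (Q ^ k).trace = 1) ∧ (∀ μ ∈ spectrum 𝕜 Q, μ = 0 ∨ μ = 1) ∧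
      (1 : 𝕜) ∈ spectrum 𝕜 Q := by
  refine ⟨fun k hk => ?_, fun μ hμ => hQ.spectrum_subset 𝕜 hμ, hQ.one_mem_spectrum ?_⟩
  · rw [hQ.pow_eq (by omega), hQ_trace]
  · rintro rfl
    simp at hQ_trace

theorem Complex.dotProduct_star_eq_one_of_sum_norm_sq {ι : Type*} [Fintype ι] {x : ι → ℂ}
    (hx : ∑ i, ‖x i‖ ^ 2 = 1) : x ⬝ᵥ star x = 1 := by
  simp only [dotProduct, Pi.star_apply, Complex.star_def, Complex.mul_conj,
    Complex.normSq_eq_norm_sq]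
  exact_mod_cast hx

theorem trace_vecMulVec_star_mul_self {ι : Type*} [Fintype ι] {x : ι → ℂ}
    (hx : x ⬝ᵥ star x = 1) : (vecMulVec x (star x) * vecMulVec x (star x)).trace = 1 := by
  rw [vecMulVec_mul_vecMulVec, trace_vecMulVec, dotProduct_smul, dotProduct_comm, hx,
    smul_eq_mul, one_mul]

section Realignment

variable {l m n : ℕ}

theorem swapRe_kronecker (A : Matrix (Fin m) (Fin m) ℂ) (B : Matrix (Fin n) (Fin n) ℂ) :
    swapRe (A ⊗ₖ B) = B ⊗ₖ A := by
  ext p q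
  exact mul_comm _ _

theorem realign_PT1_kronecker (A : Matrix (Fin m) (Fin m) ℂ) (B : Matrix (Fin n) (Fin n) ℂ) :
    realign (PT1 (A ⊗ₖ B)) = vecMulVec (vec Aᵀ) (vec B) :=
  rfl

theorem trace_realign_PT1_kronecker (A B : Matrix (Fin m) (Fin m) ℂ) :
    (realign (PT1 (A ⊗ₖ B))).trace = (A * B).trace := by
  rw [realign_PT1_kronecker, trace_vecMulVec, vec_dotProduct_vec, transpose_transpose]

theorem realign_PT1_kronecker_mul (A : Matrix (Fin l) (Fin l) ℂ)
    (B B' : Matrix (Fin m) (Fin m) ℂ) (C : Matrix (Fin n) (Fin n) ℂ) :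
    realign (PT1 (A ⊗ₖ B)) * realign (PT1 (B' ⊗ₖ C)) =
      (B' * B).trace • realign (PT1 (A ⊗ₖ C)) := by
  rw [realign_PT1_kronecker, realign_PT1_kronecker, realign_PT1_kronecker,
    vecMulVec_mul_vecMulVec, vec_dotProduct_vec, ← trace_transpose, transpose_mul,
    transpose_transpose, transpose_transpose]
  exact vecMulVec_smul _ _ _

end Realignment

theorem eq_kronecker_of_forall_eq_sum {l m n : Type*} [Fintype n]
    {σ : Matrix (l × m) (l × m) ℂ} {A : Matrix l l ℂ} {B : Matrix m m ℂ} {z : n → ℂ}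
    (hz : z ⬝ᵥ star z = 1)
    (h : ∀ i j i' j', σ (i, j) (i', j') = ∑ k, A i i' * B j j' * (z k * star (z k))) :
    σ = A ⊗ₖ B := by
  ext ⟨i, j⟩ ⟨i', j'⟩
  rw [h, ← Finset.mul_sum]
  exact (mul_right_eq_self₀.mpr (Or.inl hz))

/-- for a fully separable tripartite pure state ψ = a ⊗ b ⊗ c,
the path operators P = R(ρ₁₃^T₃)·R(ρ₃₂^T₂)·R(ρ₂₁^T₁) and
P' = (R(ρ₁₂^T₂)·R(ρ₂₁^T₁))² satisfy tr(Pⁿ) = tr(P'ⁿ) = 1 for all n ≥ 1;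
in particular all their eigenvalues are zero except a single eigenvalue 1. -/
theorem stmt17 {d₁ d₂ d₃ : ℕ}
    (a : Fin d₁ → ℂ) (b : Fin d₂ → ℂ) (c : Fin d₃ → ℂ)
    (ha : ∑ i : Fin d₁, ‖a i‖ ^ 2 = 1)
    (hb : ∑ j : Fin d₂, ‖b j‖ ^ 2 = 1)
    (hc : ∑ k : Fin d₃, ‖c k‖ ^ 2 = 1)
    (ψ : Fin d₁ × Fin d₂ × Fin d₃ → ℂ)
    (hψ : ∀ i j k, ψ (i, j, k) = a i * b j * c k)
    (ρ : Matrix (Fin d₁ × Fin d₂ × Fin d₃) (Fin d₁ × Fin d₂ × Fin d₃) ℂ)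
    (hρ : ∀ u v, ρ u v = ψ u * (starRingEnd ℂ) (ψ v))
    (ρ₁₂ : Matrix (Fin d₁ × Fin d₂) (Fin d₁ × Fin d₂) ℂ)
    (hρ₁₂ : ∀ i j i' j', ρ₁₂ (i, j) (i', j') = ∑ k, ρ (i, j, k) (i', j', k))
    (ρ₂₃ : Matrix (Fin d₂ × Fin d₃) (Fin d₂ × Fin d₃) ℂ)
    (hρ₂₃ : ∀ j k j' k', ρ₂₃ (j, k) (j', k') = ∑ i, ρ (i, j, k) (i, j', k'))
    (ρ₁₃ : Matrix (Fin d₁ × Fin d₃) (Fin d₁ × Fin d₃) ℂ)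
    (hρ₁₃ : ∀ i k i' k', ρ₁₃ (i, k) (i', k') = ∑ j, ρ (i, j, k) (i', j, k'))
    (P P' : Matrix (Fin d₁ × Fin d₁) (Fin d₁ × Fin d₁) ℂ)
    (hP : P = realign (PT1 ρ₁₃) * realign (PT1 (swapRe ρ₂₃)) *
      realign (PT1 (swapRe ρ₁₂)))
    (hP' : P' = (realign (PT1 ρ₁₂) * realign (PT1 (swapRe ρ₁₂))) ^ 2) :
    (∀ n : ℕ, 1 ≤ n → (P ^ n).trace = 1) ∧
    (∀ n : ℕ, 1 ≤ n → (P' ^ n).trace = 1) ∧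
    (∀ μ ∈ spectrum ℂ P, μ = 0 ∨ μ = 1) ∧ (1 : ℂ) ∈ spectrum ℂ P ∧
    (∀ μ ∈ spectrum ℂ P', μ = 0 ∨ μ = 1) ∧ (1 : ℂ) ∈ spectrum ℂ P' := by
  have ha1 := Complex.dotProduct_star_eq_one_of_sum_norm_sq ha
  have hb1 := Complex.dotProduct_star_eq_one_of_sum_norm_sq hb
  have hc1 := Complex.dotProduct_star_eq_one_of_sum_norm_sq hc
  set A := vecMulVec a (star a)
  set B := vecMulVec b (star b)
  set C := vecMulVec c (star c)
  have hρ_apply : ∀ i j k i' j' k', ρ (i, j, k) (i', j', k') = A i i' * B j j' * C k k' := by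
    intro i j k i' j' k'
    simp only [hρ, hψ, A, B, C, vecMulVec_apply, Pi.star_apply, Complex.star_def, map_mul]
    ring
  have h₁₂ : ρ₁₂ = A ⊗ₖ B := eq_kronecker_of_forall_eq_sum hc1 fun i j i' j' => by
    simp only [hρ₁₂, hρ_apply]; rfl
  have h₂₃ : ρ₂₃ = B ⊗ₖ C := eq_kronecker_of_forall_eq_sum ha1 fun j k j' k' => by
    simp only [hρ₂₃, hρ_apply]; exact Finset.sum_congr rfl fun _ _ => mul_rotate _ _ _
  have h₁₃ : ρ₁₃ = A ⊗ₖ C := eq_kronecker_of_forall_eq_sum hb1 fun i k i' k' => by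
    simp only [hρ₁₃, hρ_apply]; exact Finset.sum_congr rfl fun _ _ => mul_right_comm _ _ _
  have hBB : (B * B).trace = 1 := trace_vecMulVec_star_mul_self hb1
  have hCC : (C * C).trace = 1 := trace_vecMulVec_star_mul_self hc1
  set Q := realign (PT1 (A ⊗ₖ A))
  have hQ : IsIdempotentElem Q := by
    rw [IsIdempotentElem, realign_PT1_kronecker_mul, trace_vecMulVec_star_mul_self ha1, one_smul]
  have hQ_trace : Q.trace = 1 := by
    rw [trace_realign_PT1_kronecker, trace_vecMulVec_star_mul_self ha1]
  have hPQ : P = Q := by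
    rw [hP, h₁₃, h₂₃, h₁₂, swapRe_kronecker, swapRe_kronecker, realign_PT1_kronecker_mul,
      hCC, one_smul, realign_PT1_kronecker_mul, hBB, one_smul]
  have hP'Q : P' = Q := by
    rw [hP', h₁₂, swapRe_kronecker, realign_PT1_kronecker_mul, hBB, one_smul, sq, hQ.eq]
  obtain ⟨htrace_pow, hspec, hone⟩ := hQ.trace_pow_eq_one_and_spectrum hQ_trace
  rw [hPQ, hP'Q]
  exact ⟨htrace_pow, htrace_pow, hspec, hone, hspec, hone⟩
end
end
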